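/- Let s ≥ 1, let γ₀ ∈ ℝ and γ₁ > 0, suppose the identity sequence id(k) = k belongs to D(A^s), and for 1 ≤ m ≤ s define the sequence d_m by d_m(j) = (A^m id)(j) − γ₀·(Σ_{k=0}^{m−1} γ₁^k) − γ₁^m · j. Then d_{m+1} = γ₁^m d_1 + A d_m for m = 1,…,s−1, and consequently d_m = Σ_{k=0}^{m−1} γ₁^{m−1−k} A^k d_1 for m = 1,…,s. -/

import Mathlib

open scoped BigOperators

noncomputable section

/-- Tail sum `q_l = Σ_{k ≥ l} p_k`. -/
def qtail (p : ℕ → ℝ) (l : ℕ) : ℝ := ∑' k, p (l + k)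

/-- The operator `A` on real sequences: `(A v)(l) = (1/q_l) Σ_{k=l}^∞ p_k v(k)`. -/
def opAR (p : ℕ → ℝ) (v : ℕ → ℝ) : ℕ → ℝ :=
  fun l => (1 / qtail p l) * ∑' k, p (l + k) * v (l + k)

/-- Membership in the domain `D(A) = {v : Σ_k p_k |v(k)| < ∞}` (real sequences). -/
def memDAR (p : ℕ → ℝ) (v : ℕ → ℝ) : Prop :=
  Summable fun k => p k * |v k|

/-- Membership in the domain `D(A^m) = {v : A^k v ∈ D(A) for k = 0,…,m-1}`. -/
def memDAiterR (p : ℕ → ℝ) (m : ℕ) (v : ℕ → ℝ) : Prop :=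
  ∀ k < m, memDAR p ((opAR p)^[k] v)

/-- `d_m(j) = (A^m id)(j) − γ₀ Σ_{k=0}^{m−1} γ₁^k − γ₁^m j`. -/
def dseq (p : ℕ → ℝ) (γ₀ γ₁ : ℝ) (m : ℕ) : ℕ → ℝ :=
  fun j => ((opAR p)^[m] (fun k => (k : ℝ))) j -
    γ₀ * (∑ k ∈ Finset.range m, γ₁ ^ k) - γ₁ ^ m * j

/-! On `D(A)` the operator `A` is linear, and it fixes constants because `A 1 = q_l / q_l`.
Since `d_m = A^m id - c_m - γ₁^m id` with a constant `c_m`, applying `A` to `d_m` and adding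
`γ₁^m d_1 = γ₁^m (A id - γ₀ - γ₁ id)` cancels the `A id` terms and leaves `d_{m+1}`.
The closed form then follows by induction from `d_0 = 0`; the domain condition on `id` keeps
every `A^k d_1 = A^{k+1} id - γ₁ A^k id - γ₀` with `k + 1 < s` inside `D(A)`. -/

open Finset

local notation "ι" => fun k : ℕ => (k : ℝ)

section Linearity

variable {p : ℕ → ℝ}

lemma memDAR.summable_mul (hp : ∀ k, 0 ≤ p k) {v : ℕ → ℝ} (hv : memDAR p v) :
    Summable fun k => p k * v k :=
  Summable.of_norm_bounded hv fun k => by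
    rw [Real.norm_eq_abs, abs_mul, abs_of_nonneg (hp k)]

lemma memDAR.summable_mul_shift (hp : ∀ k, 0 ≤ p k) {v : ℕ → ℝ} (hv : memDAR p v) (l : ℕ) :
    Summable fun k => p (l + k) * v (l + k) := by
  simpa only [add_comm l] using (summable_nat_add_iff l).2 (hv.summable_mul hp)

lemma memDAR_sub (hp : ∀ k, 0 ≤ p k) {u v : ℕ → ℝ} (hu : memDAR p u) (hv : memDAR p v) :
    memDAR p (u - v) :=
  Summable.of_nonneg_of_le (fun k => mul_nonneg (hp k) (abs_nonneg _))
    (fun k => by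
      rw [← mul_add]
      exact mul_le_mul_of_nonneg_left (abs_sub _ _) (hp k))
    (hu.add hv)

lemma memDAR_smul (c : ℝ) {v : ℕ → ℝ} (hv : memDAR p v) : memDAR p (c • v) := by
  simpa only [memDAR, Pi.smul_apply, smul_eq_mul, abs_mul, mul_left_comm] using hv.mul_left |c|

lemma memDAR_const (hsp : Summable p) (c : ℝ) : memDAR p fun _ => c :=
  hsp.mul_right |c|

lemma qtail_pos (hp : ∀ k, 0 < p k) (hsp : Summable p) (l : ℕ) : 0 < qtail p l :=
  Summable.tsum_pos ((summable_nat_add_iff l).2 hsp |>.congr fun k => by rw [add_comm])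
    (fun k => (hp _).le) 0 (hp _)

lemma opAR_sub (hp : ∀ k, 0 ≤ p k) {u v : ℕ → ℝ} (hu : memDAR p u) (hv : memDAR p v) :
    opAR p (u - v) = opAR p u - opAR p v := by
  ext l
  simp only [opAR, Pi.sub_apply, mul_sub,
    (hu.summable_mul_shift hp l).tsum_sub (hv.summable_mul_shift hp l)]

lemma opAR_smul (c : ℝ) (v : ℕ → ℝ) : opAR p (c • v) = c • opAR p v := by
  ext l
  simp only [opAR, Pi.smul_apply, smul_eq_mul, mul_left_comm _ c, tsum_mul_left]

lemma opAR_const (hp : ∀ k, 0 < p k) (hsp : Summable p) (c : ℝ) :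
    opAR p (fun _ => c) = fun _ => c := by
  ext l
  rw [opAR, tsum_mul_right, ← qtail, ← mul_assoc, one_div_mul_cancel (qtail_pos hp hsp l).ne',
    one_mul]

lemma opAR_sum (hp : ∀ k, 0 ≤ p k) {α : Type*} {s : Finset α} {f : α → ℕ → ℝ}
    (hf : ∀ i ∈ s, memDAR p (f i)) :
    opAR p (∑ i ∈ s, f i) = ∑ i ∈ s, opAR p (f i) := by
  ext l
  simp only [opAR, Finset.sum_apply, mul_sum,
    Summable.tsum_finsetSum fun i hi => (hf i hi).summable_mul_shift hp l]

end Linearity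

section Dseq

variable {p : ℕ → ℝ} (hp : ∀ k, 0 < p k) (hsp : Summable p) {s : ℕ}
  (hid : memDAiterR p s ι) (γ₀ γ₁ : ℝ)

lemma dseq_eq (m : ℕ) :
    dseq p γ₀ γ₁ m =
      (opAR p)^[m] ι - (fun _ => γ₀ * ∑ k ∈ range m, γ₁ ^ k) - γ₁ ^ m • ι :=
  rfl

lemma dseq_zero : dseq p γ₀ γ₁ 0 = 0 := by
  ext j
  simp [dseq]

include hp hsp hid

lemma dseq_succ {m : ℕ} (hm : m < s) :
    dseq p γ₀ γ₁ (m + 1) = γ₁ ^ m • dseq p γ₀ γ₁ 1 + opAR p (dseq p γ₀ γ₁ m) := by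
  have hp' k := (hp k).le
  have hι : memDAR p ι := hid 0 (by omega)
  rw [dseq_eq γ₀ γ₁ m, opAR_sub hp' (memDAR_sub hp' (hid m hm) (memDAR_const hsp _))
      (memDAR_smul _ hι), opAR_sub hp' (hid m hm) (memDAR_const hsp _),
    opAR_const hp hsp, opAR_smul]
  ext j
  simp only [dseq, Function.iterate_succ_apply', Function.iterate_zero_apply, Pi.add_apply,
    Pi.sub_apply, Pi.smul_apply, smul_eq_mul, sum_range_succ, range_one, sum_singleton]
  ring

lemma iterate_opAR_dseq_one {k : ℕ} (hk : k < s) :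
    (opAR p)^[k] (dseq p γ₀ γ₁ 1) =
      (opAR p)^[k + 1] ι - γ₁ • (opAR p)^[k] ι - fun _ => γ₀ := by
  induction k with
  | zero =>
    ext j
    simp only [dseq, Function.iterate_zero_apply, Function.iterate_one, range_one,
      sum_singleton, pow_zero, pow_one, mul_one, zero_add, Pi.sub_apply, Pi.smul_apply, smul_eq_mul]
    ring
  | succ k ih =>
    have hp' k := (hp k).le
    rw [Function.iterate_succ_apply' (opAR p) k, ih (by omega),
      opAR_sub hp' (memDAR_sub hp' (hid _ hk) (memDAR_smul _ (hid k (by omega))))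
        (memDAR_const hsp _),
      opAR_sub hp' (hid _ hk) (memDAR_smul _ (hid k (by omega))), opAR_smul, opAR_const hp hsp]
    simp only [Function.iterate_succ_apply']

lemma memDAR_iterate_opAR_dseq_one {k : ℕ} (hk : k + 1 < s) :
    memDAR p ((opAR p)^[k] (dseq p γ₀ γ₁ 1)) := by
  have hp' k := (hp k).le
  rw [iterate_opAR_dseq_one hp hsp hid γ₀ γ₁ (by omega)]
  exact memDAR_sub hp' (memDAR_sub hp' (hid _ hk) (memDAR_smul _ (hid k (by omega))))
    (memDAR_const hsp _)

lemma dseq_eq_sum {m : ℕ} (hm : m ≤ s) :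
    dseq p γ₀ γ₁ m = ∑ k ∈ range m, γ₁ ^ (m - 1 - k) • (opAR p)^[k] (dseq p γ₀ γ₁ 1) := by
  induction m with
  | zero => exact dseq_zero γ₀ γ₁
  | succ m ih =>
    have hp' k := (hp k).le
    rw [dseq_succ hp hsp hid γ₀ γ₁ hm, ih (by omega),
      opAR_sum hp' fun k hk => memDAR_smul _ (memDAR_iterate_opAR_dseq_one hp hsp hid γ₀ γ₁
        (by rw [mem_range] at hk; omega)),
      sum_range_succ', add_comm]
    congr 1
    refine sum_congr rfl fun k hk => ?_
    rw [opAR_smul, ← Function.iterate_succ_apply' (opAR p)]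
    congr 2
    rw [mem_range] at hk
    omega

end Dseq

theorem dseq_recursion_general
    (p : ℕ → ℝ) (hp : ∀ k, 0 < p k) (hsum : HasSum p 1)
    (s : ℕ) (γ₀ : ℝ) (γ₁ : ℝ)
    (hid : memDAiterR p s (fun k => (k : ℝ))) :
    (∀ m, 1 ≤ m → m ≤ s - 1 →
        dseq p γ₀ γ₁ (m + 1) =
          fun j => γ₁ ^ m * dseq p γ₀ γ₁ 1 j + opAR p (dseq p γ₀ γ₁ m) j) ∧
      (∀ m, 1 ≤ m → m ≤ s →
        dseq p γ₀ γ₁ m =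
          fun j => ∑ k ∈ Finset.range m,
            γ₁ ^ (m - 1 - k) * ((opAR p)^[k] (dseq p γ₀ γ₁ 1)) j) := by
  have hsp := hsum.summable
  refine ⟨fun m hm hms => ?_, fun m _ hms => ?_⟩
  · rw [dseq_succ hp hsp hid γ₀ γ₁ (by omega)]
    rfl
  · rw [dseq_eq_sum hp hsp hid γ₀ γ₁ hms]
    ext j
    simp only [Finset.sum_apply, Pi.smul_apply, smul_eq_mul]

/-- The recursion `d_{m+1} = γ₁^m d_1 + A d_m` for `m = 1,…,s−1`, and consequently
`d_m = Σ_{k=0}^{m−1} γ₁^{m−1−k} A^k d_1` for `m = 1,…,s`. -/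
theorem dseq_recursion
    (p : ℕ → ℝ) (hp : ∀ k, 0 < p k) (hsum : HasSum p 1)
    (s : ℕ) (hs : 1 ≤ s) (γ₀ : ℝ) (γ₁ : ℝ) (hγ₁ : 0 < γ₁)
    (hid : memDAiterR p s (fun k => (k : ℝ))) :
    (∀ m, 1 ≤ m → m ≤ s - 1 →
        dseq p γ₀ γ₁ (m + 1) =
          fun j => γ₁ ^ m * dseq p γ₀ γ₁ 1 j + opAR p (dseq p γ₀ γ₁ m) j) ∧
      (∀ m, 1 ≤ m → m ≤ s →
        dseq p γ₀ γ₁ m =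
          fun j => ∑ k ∈ Finset.range m,
            γ₁ ^ (m - 1 - k) * ((opAR p)^[k] (dseq p γ₀ γ₁ 1)) j) :=
  dseq_recursion_general p hp hsum s γ₀ γ₁ hid
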